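/- arXiv:2601.14078 — 2 statements merged into one kernel-verified Lean document; each statement's English description precedes it below -/
import Mathlib

section
/- Let A be an I-diamond DFA, and let w₁ ∈ C₁*, w₂ ∈ C₂* with C₁ × C₂ ⊆ I. Then for every state s for which Δ(s, w₁w₂) is defined, Δ(s, w₁w₂) = Δ(s, w₂w₁), and moreover Δ(s, w₁w₂) = Δ(s, w) for any word w that is an interleaving (shuffle) of w₁ and w₂. -/
/-- A deterministic finite automaton with a partial transition function. -/
structure PDFA (A S : Type) where
  step : S → A → Option S
  s0 : S
  F : Set S

/-- Extension of the partial transition function to words. -/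
def PDFA.stepw {A S : Type} (M : PDFA A S) : S → List A → Option S
  | s, [] => some s
  | s, a :: u => (M.step s a).bind fun t => M.stepw t u

/-- The I-diamond property: independent letters commute (as partial values). -/
def IDiamond {A S : Type} (M : PDFA A S) (I : A → A → Prop) : Prop :=
  ∀ a b, I a b → ∀ s, M.stepw s [a, b] = M.stepw s [b, a]

/-- Acceptance of a word by a PDFA. -/
def PDFA.Accepts {A S : Type} (M : PDFA A S) (w : List A) : Prop :=
  ∃ s ∈ M.F, M.stepw M.s0 w = some s

/-- `Interleave u v w` : `w` is an interleaving (shuffle) of `u` and `v`. -/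
inductive Interleave {A : Type} : List A → List A → List A → Prop
  | nil : Interleave [] [] []
  | left {a u v w} : Interleave u v w → Interleave (a :: u) v (a :: w)
  | right {a u v w} : Interleave u v w → Interleave u (a :: v) (a :: w)

/-!
Running a word is compositional (`PDFA.stepw_append`), so equality of the partial maps
`(M.stepw · u)` is a congruence for concatenation. In an interleaving of `w₁` and `w₂`, each
letter of `w₂` can be moved to the right past the letters of `w₁` preceding it, one diamond at a
time, which sorts the interleaving into `w₁ ++ w₂`; and `w₂ ++ w₁` is itself an interleaving.
-/

namespace Interleave

variable {A : Type}

theorem nil_right : ∀ u : List A, Interleave u [] u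
  | [] => nil
  | _ :: u => (nil_right u).left

theorem append_swap (u : List A) : ∀ v : List A, Interleave u v (v ++ u)
  | [] => nil_right u
  | _ :: v => (append_swap u v).right

end Interleave

namespace PDFA

variable {A S : Type} {M : PDFA A S}

theorem stepw_append (u v : List A) (s : S) :
    M.stepw s (u ++ v) = (M.stepw s u).bind (M.stepw · v) := by
  induction u generalizing s with
  | nil => rfl
  | cons a u ih => simp only [List.cons_append, stepw, ih, Option.bind_assoc]

theorem stepw_append_congr {u u' v v' : List A} (hu : (M.stepw · u) = (M.stepw · u'))
    (hv : (M.stepw · v) = (M.stepw · v')) : (M.stepw · (u ++ v)) = (M.stepw · (u' ++ v')) := by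
  funext s
  rw [stepw_append, stepw_append, congrFun hu s, hv]

theorem stepw_cons_congr (a : A) {u v : List A} (h : (M.stepw · u) = (M.stepw · v)) :
    (M.stepw · (a :: u)) = (M.stepw · (a :: v)) :=
  stepw_append_congr (u := [a]) rfl h

variable {I : A → A → Prop}

theorem stepw_append_singleton_of_indep (hd : IDiamond M I) {b : A} :
    ∀ {u : List A}, (∀ a ∈ u, I a b) → (M.stepw · (u ++ [b])) = (M.stepw · (b :: u))
  | [], _ => rfl
  | a :: u, h =>
    calc (M.stepw · (a :: (u ++ [b])))
        = (M.stepw · (a :: b :: u)) :=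
          stepw_cons_congr a (stepw_append_singleton_of_indep hd fun c hc => h c (.tail a hc))
      _ = (M.stepw · ([a, b] ++ u)) := rfl
      _ = (M.stepw · ([b, a] ++ u)) := stepw_append_congr (funext (hd a b (h a (.head u)))) rfl

theorem stepw_interleave (hd : IDiamond M I) {u v w : List A} (hw : Interleave u v w)
    (h : ∀ a ∈ u, ∀ b ∈ v, I a b) : (M.stepw · w) = (M.stepw · (u ++ v)) := by
  induction hw with
  | nil => rfl
  | @left a u v w _ ih =>
    exact stepw_cons_congr a (ih fun c hc => h c (.tail a hc))
  | @right b u v w _ ih =>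
    calc (M.stepw · (b :: w))
        = (M.stepw · ((b :: u) ++ v)) :=
          stepw_cons_congr b (ih fun a ha c hc => h a ha c (.tail b hc))
      _ = (M.stepw · ((u ++ [b]) ++ v)) :=
          stepw_append_congr
            (stepw_append_singleton_of_indep hd fun a ha => h a ha b (.head v)).symm rfl
      _ = (M.stepw · (u ++ b :: v)) := by simp

end PDFA

theorem stmt1_general {A S : Type} (I : A → A → Prop) (M : PDFA A S) (hd : IDiamond M I)
    (C₁ C₂ : Set A) (hind : ∀ a ∈ C₁, ∀ b ∈ C₂, I a b)
    (w₁ w₂ : List A) (h1 : ∀ a ∈ w₁, a ∈ C₁) (h2 : ∀ a ∈ w₂, a ∈ C₂) :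
    ∀ s s', M.stepw s (w₁ ++ w₂) = some s' →
      M.stepw s (w₂ ++ w₁) = some s' ∧
      ∀ w, Interleave w₁ w₂ w → M.stepw s w = some s' := by
  intro s s' hs
  have hI : ∀ a ∈ w₁, ∀ b ∈ w₂, I a b := fun a ha b hb => hind a (h1 a ha) b (h2 b hb)
  have shuffle : ∀ w, Interleave w₁ w₂ w → M.stepw s w = some s' := fun w hw =>
    (congrFun (PDFA.stepw_interleave hd hw hI) s).trans hs
  exact ⟨shuffle _ (Interleave.append_swap w₁ w₂), shuffle⟩

theorem stmt1 {A S : Type} (I : A → A → Prop) (hsym : Symmetric I)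
    (hirr : ∀ a, ¬ I a a) (M : PDFA A S) (hd : IDiamond M I)
    (C₁ C₂ : Set A) (hind : ∀ a ∈ C₁, ∀ b ∈ C₂, I a b)
    (w₁ w₂ : List A) (h1 : ∀ a ∈ w₁, a ∈ C₁) (h2 : ∀ a ∈ w₂, a ∈ C₂) :
    ∀ s s', M.stepw s (w₁ ++ w₂) = some s' →
      M.stepw s (w₂ ++ w₁) = some s' ∧
      ∀ w, Interleave w₁ w₂ w → M.stepw s w = some s' :=
  stmt1_general I M hd C₁ C₂ hind w₁ w₂ h1 h2
end

section
/- Let A be an I-diamond DFA. Fix a state s, sets C₁, C₂ ⊆ Σ with C₁ × C₂ ⊆ I, and words w₁ ∈ C₁*, w₂ ∈ C₂* with s₁ = Δ(s,w₁) and s₂ = Δ(s,w₂). Then Δ(s, w₁w₂) depends only on (s, s₁, s₂, C₂): for any other words w₁' ∈ C₁'*, w₂' ∈ C₂* with C₁' the maximal set of letters independent from C₂, such that Δ(s,w₁') = s₁ and Δ(s,w₂') = s₂, one has Δ(s, w₁'w₂') = Δ(s, w₁w₂). Hence there exists a partial function Diam : S³ × 2^Σ → S with Diam(s, s₁, s₂,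 C₂) = Δ(s, w₁w₂). -/
lemma stepw_append {A S : Type} (M : PDFA A S) :
    ∀ (u v : List A) (s : S),
      M.stepw s (u ++ v) = (M.stepw s u).bind fun t => M.stepw t v := by
  intro u
  induction u with
  | nil => intro v s; simp [PDFA.stepw]
  | cons a u ih =>
    intro v s
    simp only [List.cons_append, PDFA.stepw, Option.bind_assoc]
    cases M.step s a with
    | none => simp
    | some t => simp [ih]

lemma stepw_swap {A S : Type} {I : A → A → Prop} {M : PDFA A S}
    (hd : IDiamond M I) :
    ∀ (v : List A) (a : A), (∀ b ∈ v, I a b) →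
      ∀ s, M.stepw s (a :: v) = M.stepw s (v ++ [a]) := by
  intro v
  induction v with
  | nil => intro a _ s; rfl
  | cons c v ih =>
    intro a h s
    have h1 : M.stepw s ([a, c] ++ v) = M.stepw s ([c, a] ++ v) := by
      rw [stepw_append, stepw_append, hd a c (h c (by simp)) s]
    have h2 : M.stepw s ([c] ++ (a :: v)) = M.stepw s ([c] ++ (v ++ [a])) := by
      rw [stepw_append, stepw_append]
      cases M.stepw s [c] with
      | none => rfl
      | some t => simp [ih a (fun b hb => h b (by simp [hb])) t]
    have e1 : ([a, c] ++ v) = a :: c :: v := rfl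
    have e2 : ([c, a] ++ v) = [c] ++ (a :: v) := rfl
    have e3 : ([c] ++ (v ++ [a])) = (c :: v) ++ [a] := by simp
    rw [e1, e2] at h1
    rw [e3] at h2
    exact h1.trans h2

lemma stepw_comm {A S : Type} {I : A → A → Prop} {M : PDFA A S}
    (hd : IDiamond M I) :
    ∀ (u v : List A), (∀ a ∈ u, ∀ b ∈ v, I a b) →
      ∀ s, M.stepw s (u ++ v) = M.stepw s (v ++ u) := by
  intro u
  induction u with
  | nil => intro v _ s; simp
  | cons a u ih =>
    intro v h s
    have h1 : M.stepw s ((a :: u) ++ v) = M.stepw s (a :: (v ++ u)) := by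
      simp only [List.cons_append, PDFA.stepw]
      cases M.step s a with
      | none => rfl
      | some t => exact ih v (fun x hx b hb => h x (by simp [hx]) b hb) t
    have h2 : M.stepw s (a :: v) = M.stepw s (v ++ [a]) :=
      stepw_swap hd v a (fun b hb => h a (by simp) b hb) s
    have h3 : M.stepw s ((a :: v) ++ u) = M.stepw s ((v ++ [a]) ++ u) := by
      rw [stepw_append, stepw_append, h2]
    calc M.stepw s ((a :: u) ++ v) = M.stepw s ((a :: v) ++ u) := by
          simpa using h1
      _ = M.stepw s ((v ++ [a]) ++ u) := h3
      _ = M.stepw s (v ++ (a :: u)) := by simp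

/-- Well-definedness of the diamond value. -/
lemma diam_unique {A S : Type} {I : A → A → Prop} (hsym : Symmetric I)
    {M : PDFA A S} (hd : IDiamond M I)
    (t t₁ t₂ : S) (D₂ : Set A) (u₁ u₂ u₁' u₂' : List A)
    (hu₁ : ∀ a ∈ u₁, ∀ b ∈ D₂, I a b) (hu₂ : ∀ a ∈ u₂, a ∈ D₂)
    (hu₁' : ∀ a ∈ u₁', ∀ b ∈ D₂, I a b) (hu₂' : ∀ a ∈ u₂', a ∈ D₂)
    (e1 : M.stepw t u₁ = some t₁) (e2 : M.stepw t u₂ = some t₂)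
    (e1' : M.stepw t u₁' = some t₁) (e2' : M.stepw t u₂' = some t₂) :
    M.stepw t (u₁ ++ u₂) = M.stepw t (u₁' ++ u₂') := by
  have c2 : M.stepw t (u₁' ++ u₂) = M.stepw t (u₂ ++ u₁') :=
    stepw_comm hd u₁' u₂ (fun a ha b hb => hu₁' a ha b (hu₂ b hb)) t
  have c3 : M.stepw t (u₁' ++ u₂') = M.stepw t (u₂' ++ u₁') :=
    stepw_comm hd u₁' u₂' (fun a ha b hb => hu₁' a ha b (hu₂' b hb)) t
  calc M.stepw t (u₁ ++ u₂)
      = M.stepw t₁ u₂ := by rw [stepw_append, e1]; rfl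
    _ = M.stepw t (u₁' ++ u₂) := by rw [stepw_append, e1']; rfl
    _ = M.stepw t (u₂ ++ u₁') := c2
    _ = M.stepw t₂ u₁' := by rw [stepw_append, e2]; rfl
    _ = M.stepw t (u₂' ++ u₁') := by rw [stepw_append, e2']; rfl
    _ = M.stepw t (u₁' ++ u₂') := c3.symm

theorem stmt2 {A S : Type} (I : A → A → Prop) (hsym : Symmetric I)
    (hirr : ∀ a, ¬ I a a) (M : PDFA A S) (hd : IDiamond M I)
    (s s₁ s₂ : S) (C₁ C₂ : Set A) (hind : ∀ a ∈ C₁, ∀ b ∈ C₂, I a b)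
    (w₁ w₂ : List A) (h1 : ∀ a ∈ w₁, a ∈ C₁) (h2 : ∀ a ∈ w₂, a ∈ C₂)
    (hs1 : M.stepw s w₁ = some s₁) (hs2 : M.stepw s w₂ = some s₂) :
    -- `Δ(s, w₁w₂)` depends only on `(s, s₁, s₂, C₂)`:
    (∀ w₁' w₂' : List A,
        (∀ a ∈ w₁', a ∈ {a : A | ∀ b ∈ C₂, I a b}) → (∀ a ∈ w₂', a ∈ C₂) →
        M.stepw s w₁' = some s₁ → M.stepw s w₂' = some s₂ →
        M.stepw s (w₁' ++ w₂') = M.stepw s (w₁ ++ w₂)) ∧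
    -- hence the partial function `Diam` exists:
    ∃ Diam : S → S → S → Set A → Option S,
      ∀ (t t₁ t₂ : S) (D₂ : Set A) (u₁ u₂ : List A),
        (∀ a ∈ u₁, ∀ b ∈ D₂, I a b) → (∀ a ∈ u₂, a ∈ D₂) →
        M.stepw t u₁ = some t₁ → M.stepw t u₂ = some t₂ →
        Diam t t₁ t₂ D₂ = M.stepw t (u₁ ++ u₂) := by
  constructor
  · intro w₁' w₂' h1' h2' hs1' hs2'
    exact diam_unique hsym hd s s₁ s₂ C₂ w₁' w₂' w₁ w₂
      (fun a ha b hb => h1' a ha b hb) h2'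
      (fun a ha b hb => hind a (h1 a ha) b hb) h2 hs1' hs2' hs1 hs2
  · classical
    refine ⟨fun t t₁ t₂ D₂ =>
      if h : ∃ p : List A × List A,
          (∀ a ∈ p.1, ∀ b ∈ D₂, I a b) ∧ (∀ a ∈ p.2, a ∈ D₂) ∧
          M.stepw t p.1 = some t₁ ∧ M.stepw t p.2 = some t₂
        then M.stepw t (h.choose.1 ++ h.choose.2) else none, ?_⟩
    intro t t₁ t₂ D₂ u₁ u₂ hu₁ hu₂ e1 e2
    have hex : ∃ p : List A × List A,
        (∀ a ∈ p.1, ∀ b ∈ D₂, I a b) ∧ (∀ a ∈ p.2, a ∈ D₂) ∧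
        M.stepw t p.1 = some t₁ ∧ M.stepw t p.2 = some t₂ :=
      ⟨(u₁, u₂), hu₁, hu₂, e1, e2⟩
    dsimp only
    rw [dif_pos hex]
    obtain ⟨q1, q2, q3, q4⟩ := hex.choose_spec
    exact diam_unique hsym hd t t₁ t₂ D₂ hex.choose.1 hex.choose.2 u₁ u₂
      q1 q2 hu₁ hu₂ q3 q4 e1 e2
end
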